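/- arXiv:2508.12909 — 2 statements merged into one kernel-verified Lean document; each statement's English description precedes it below -/
import Mathlib

section
/- For α ∈ (0,1) and r > 0 with r < 1/(1−α), the series Σ_{k=0}^∞ (ξ^k / k!) · (Γ(rk+1)/Γ(αrk+1)) · t^{αrk} converges for all ξ > 0 and t > 0. -/
open Real

/-- Log-convexity of Gamma gives `Γ(y+1)/Γ(x+1) ≤ (y+1)^(y-x)` for `0 < x < y`. -/
lemma gamma_ratio_le_rpow {x y : ℝ} (hx : 0 < x) (hxy : x < y) :
    Real.Gamma (y + 1) / Real.Gamma (x + 1) ≤ (y + 1) ^ (y - x) := by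
  have hx1 : (0:ℝ) < x + 1 := by linarith
  have hy1 : (0:ℝ) < y + 1 := by linarith
  have hΓx : 0 < Real.Gamma (x + 1) := Real.Gamma_pos_of_pos hx1
  have hΓy : 0 < Real.Gamma (y + 1) := Real.Gamma_pos_of_pos hy1
  have hs := Real.convexOn_log_Gamma.slope_mono_adjacent
    (Set.mem_Ioi.2 hx1) (Set.mem_Ioi.2 (show (0:ℝ) < y + 2 by linarith))
    (show x + 1 < y + 1 by linarith) (show y + 1 < y + 2 by linarith)
  have hΓ2 : Real.Gamma (y + 2) = (y + 1) * Real.Gamma (y + 1) := by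
    have := Real.Gamma_add_one (show y + 1 ≠ 0 by linarith)
    rw [show y + 1 + 1 = y + 2 by ring] at this
    exact this
  have hslope : (Real.log (Real.Gamma (y + 1)) - Real.log (Real.Gamma (x + 1))) / (y - x)
      ≤ Real.log (y + 1) := by
    have h2 : Real.log (Real.Gamma (y + 2)) - Real.log (Real.Gamma (y + 1))
        = Real.log (y + 1) := by
      rw [hΓ2, Real.log_mul (by linarith) hΓy.ne']; ring
    have h3 : y + 2 - (y + 1) = 1 := by ring
    have h4 : y + 1 - (x + 1) = y - x := by ring
    simp only [Function.comp_apply, h3, h4, div_one] at hs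
    rw [h2] at hs
    exact hs
  have hyx : 0 < y - x := by linarith
  have hlog : Real.log (Real.Gamma (y + 1)) - Real.log (Real.Gamma (x + 1))
      ≤ (y - x) * Real.log (y + 1) := by
    rw [div_le_iff₀ hyx] at hslope
    linarith [hslope]
  have : Real.Gamma (y + 1) ≤ (y + 1) ^ (y - x) * Real.Gamma (x + 1) := by
    have hexp := Real.exp_le_exp.2 (show Real.log (Real.Gamma (y + 1))
        ≤ (y - x) * Real.log (y + 1) + Real.log (Real.Gamma (x + 1)) by linarith)
    rw [Real.exp_log hΓy, Real.exp_add, Real.exp_log hΓx] at hexp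
    calc Real.Gamma (y + 1) ≤ Real.exp ((y - x) * Real.log (y + 1)) * Real.Gamma (x + 1) :=
          hexp
      _ = (y + 1) ^ (y - x) * Real.Gamma (x + 1) := by
          rw [Real.rpow_def_of_pos hy1, mul_comm (Real.log (y + 1))]
  rw [div_le_iff₀ hΓx]
  exact this

/-- convergence of the series for E[exp(ξ E_t^r)] when r < 1/(1-α). -/
theorem mittag_leffler_type_series_summable
    (α r : ℝ) (hα0 : 0 < α) (hα1 : α < 1) (hr0 : 0 < r) (hr : r < 1 / (1 - α)) :
    ∀ ξ t : ℝ, 0 < ξ → 0 < t →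
      Summable (fun k : ℕ =>
        ξ ^ k / (Nat.factorial k) *
          (Real.Gamma (r * k + 1) / Real.Gamma (α * r * k + 1)) * t ^ (α * r * k)) := by
  intro ξ t hξ ht
  have h1α : 0 < 1 - α := by linarith
  have hrα : r * (1 - α) < 1 := by
    rw [lt_div_iff₀ h1α] at hr; linarith
  have hrα0 : 0 < r * (1 - α) := by positivity
  set ε : ℝ := 1 - r * (1 - α) with hεdef
  have hε0 : 0 < ε := by simp only [hεdef]; linarith
  set C : ℝ := ξ * Real.exp 1 * t ^ (α * r) * (r + 1) ^ (r * (1 - α)) with hCdef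
  have hC0 : 0 < C := by positivity
  set a : ℕ → ℝ := fun k =>
    ξ ^ k / (Nat.factorial k) *
      (Real.Gamma (r * k + 1) / Real.Gamma (α * r * k + 1)) * t ^ (α * r * k) with ha
  have ha_pos : ∀ k, 0 < a k := by
    intro k
    have h1 : 0 < Real.Gamma (r * k + 1) := Real.Gamma_pos_of_pos (by positivity)
    have h2 : 0 < Real.Gamma (α * r * k + 1) := Real.Gamma_pos_of_pos (by positivity)
    have h3 : (0:ℝ) < Nat.factorial k := by positivity
    positivity
  -- eventual bound on the "ratio" quantity
  have htend : Filter.Tendsto (fun k : ℕ => C * (k : ℝ) ^ (-ε)) Filter.atTop (nhds 0) := by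
    have h1 : Filter.Tendsto (fun k : ℕ => (k : ℝ) ^ (-ε)) Filter.atTop (nhds 0) :=
      (tendsto_rpow_neg_atTop hε0).comp tendsto_natCast_atTop_atTop
    simpa using h1.const_mul C
  have hev : ∀ᶠ k : ℕ in Filter.atTop, a k ≤ (1/2 : ℝ) ^ k := by
    filter_upwards [htend.eventually_le_const (show (0:ℝ) < 1/2 by norm_num),
      Filter.eventually_ge_atTop 1] with k hk2 hk1
    have hk0 : (0:ℝ) < (k : ℝ) := by exact_mod_cast hk1
    have hk1' : (1:ℝ) ≤ (k : ℝ) := by exact_mod_cast hk1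
    -- factorial lower bound
    have hfac : (1:ℝ) / (Nat.factorial k) ≤ (Real.exp 1 / k) ^ k := by
      have h := Real.pow_div_factorial_le_exp (x := (k:ℝ)) k.cast_nonneg k
      rw [show Real.exp (k:ℝ) = Real.exp 1 ^ k by rw [← Real.exp_nat_mul, mul_one]] at h
      rw [div_pow, div_le_div_iff₀ (by positivity) (by positivity), one_mul]
      rw [div_le_iff₀ (by positivity)] at h
      linarith [h]
    -- Gamma ratio bound
    have hGam : Real.Gamma (r * k + 1) / Real.Gamma (α * r * k + 1)
        ≤ ((r * k + 1) ^ (r * (1 - α))) ^ k := by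
      have hx : (0:ℝ) < α * r * k := by positivity
      have hxy : α * r * (k:ℝ) < r * k := by
        have : α * r < r := by nlinarith
        nlinarith
      have h := gamma_ratio_le_rpow hx hxy
      have heq : (r * (k:ℝ) + 1) ^ (r * (k:ℝ) - α * r * k)
          = ((r * k + 1) ^ (r * (1 - α))) ^ k := by
        rw [show r * (k:ℝ) - α * r * k = r * (1 - α) * k by ring,
          Real.rpow_mul (by positivity), Real.rpow_natCast]
      rw [heq] at h
      exact h
    -- rewrite t power
    have htpow : t ^ (α * r * (k:ℝ)) = (t ^ (α * r)) ^ k := by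
      rw [Real.rpow_mul ht.le, Real.rpow_natCast]
    have step1 : a k ≤ (ξ * (Real.exp 1 / k) * ((r * k + 1) ^ (r * (1 - α))) * t ^ (α * r)) ^ k := by
      have : a k = ξ ^ k * ((1:ℝ) / (Nat.factorial k)) *
          (Real.Gamma (r * k + 1) / Real.Gamma (α * r * k + 1)) * (t ^ (α * r)) ^ k := by
        rw [ha]; simp only []; rw [htpow]; ring
      rw [this, mul_pow, mul_pow, mul_pow]
      have h1 : 0 < Real.Gamma (r * k + 1) := Real.Gamma_pos_of_pos (by positivity)
      have h2 : 0 < Real.Gamma (α * r * k + 1) := Real.Gamma_pos_of_pos (by positivity)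
      gcongr
    have step2 : ξ * (Real.exp 1 / k) * ((r * k + 1) ^ (r * (1 - α))) * t ^ (α * r)
        ≤ C * (k:ℝ) ^ (-ε) := by
      have hbase : (r * (k:ℝ) + 1) ^ (r * (1 - α))
          ≤ (r + 1) ^ (r * (1 - α)) * (k:ℝ) ^ (r * (1 - α)) := by
        rw [← Real.mul_rpow (by positivity) hk0.le]
        apply Real.rpow_le_rpow (by positivity) _ hrα0.le
        nlinarith
      have hkpow : (k:ℝ) ^ (r * (1 - α)) / k = (k:ℝ) ^ (-ε) := by
        rw [hεdef, neg_sub, Real.rpow_sub hk0, Real.rpow_one]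
      calc ξ * (Real.exp 1 / k) * ((r * k + 1) ^ (r * (1 - α))) * t ^ (α * r)
          ≤ ξ * (Real.exp 1 / k) * ((r + 1) ^ (r * (1 - α)) * (k:ℝ) ^ (r * (1 - α)))
            * t ^ (α * r) := by gcongr <;> positivity
        _ = C * ((k:ℝ) ^ (r * (1 - α)) / k) := by rw [hCdef]; field_simp
        _ = C * (k:ℝ) ^ (-ε) := by rw [hkpow]
    calc a k ≤ (ξ * (Real.exp 1 / k) * ((r * k + 1) ^ (r * (1 - α))) * t ^ (α * r)) ^ k := step1
      _ ≤ (C * (k:ℝ) ^ (-ε)) ^ k := by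
          apply pow_le_pow_left₀ (by positivity) step2
      _ ≤ (1/2 : ℝ) ^ k := pow_le_pow_left₀ (by positivity) hk2 k
  -- conclude summability
  have hgeo : Summable (fun k : ℕ => (1/2 : ℝ) ^ k) :=
    summable_geometric_of_lt_one (by norm_num) (by norm_num)
  apply summable_of_isBigO_nat hgeo
  rw [Asymptotics.isBigO_iff]
  refine ⟨1, ?_⟩
  filter_upwards [hev] with k hk
  rw [Real.norm_eq_abs, Real.norm_eq_abs, abs_of_pos (ha_pos k),
    abs_of_pos (by positivity : (0:ℝ) < (1/2:ℝ)^k), one_mul]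
  exact hk
end

section
/- For α ∈ (0,1) and r > 1/(1−α), the series Σ_{k=0}^∞ (ξ^k / k!) · (Γ(rk+1)/Γ(αrk+1)) · t^{αrk} diverges (equals +∞) for any ξ > 0 and t > 0. -/
open Real Filter ENNReal

set_option maxHeartbeats 1600000 in
/-- divergence of the series for E[exp(ξ E_t^r)] when r > 1/(1-α). -/
theorem mittag_leffler_type_series_diverges
    (α r : ℝ) (hα0 : 0 < α) (hα1 : α < 1) (hr : 1 / (1 - α) < r) :
    ∀ ξ t : ℝ, 0 < ξ → 0 < t →
      ∑' k : ℕ, ENNReal.ofReal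
        (ξ ^ k / (Nat.factorial k) *
          (Real.Gamma (r * k + 1) / Real.Gamma (α * r * k + 1)) * t ^ (α * r * k)) = ⊤ := by
  intro ξ t hξ ht
  have h1α : (0:ℝ) < 1 - α := by linarith
  have hr1 : 1 < r := by
    have h : (1:ℝ) ≤ 1 / (1 - α) := by
      rw [le_div_iff₀ h1α]; nlinarith
    linarith
  have hr0 : (0:ℝ) < r := by linarith
  have hαr : 0 < α * r := mul_pos hα0 hr0
  have hc : 0 < r - α * r - 1 := by
    have h := (div_lt_iff₀ h1α).mp hr
    nlinarith
  set c : ℝ := r - α * r - 1 with hc_def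
  set C : ℝ := Real.log (α * r + 1) with hC_def
  have hC0 : 0 ≤ C := Real.log_nonneg (by linarith)
  set D : ℝ := Real.log ξ + α * r * Real.log t - r - α * r * C with hD_def
  set f : ℕ → ℝ := fun k => ξ ^ k / (Nat.factorial k) *
      (Real.Gamma (r * k + 1) / Real.Gamma (α * r * k + 1)) * t ^ (α * r * k) with hf_def
  have hG1 : ∀ k : ℕ, 0 < Real.Gamma (r * k + 1) := fun k =>
    Real.Gamma_pos_of_pos (by positivity)
  have hG2 : ∀ k : ℕ, 0 < Real.Gamma (α * r * k + 1) := fun k =>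
    Real.Gamma_pos_of_pos (by positivity)
  have hfpos : ∀ k : ℕ, 0 < f k := by
    intro k
    have h1 := hG1 k
    have h2 := hG2 k
    have h3 := Real.rpow_pos_of_pos ht (α * r * k)
    have h4 := Nat.factorial_pos k
    positivity
  -- the lower bound tends to infinity
  have hbase : Tendsto (fun k : ℕ => (c / 2 * Real.log k + D) * (k:ℝ) - C) atTop atTop := by
    have h1 : Tendsto (fun k : ℕ => (c / 2 * Real.log k + D) * (k:ℝ)) atTop atTop := by
      apply Filter.Tendsto.atTop_mul_atTop₀ _ tendsto_natCast_atTop_atTop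
      apply tendsto_atTop_add_const_right
      exact (Real.tendsto_log_atTop.comp tendsto_natCast_atTop_atTop).const_mul_atTop
        (by positivity)
    have := tendsto_atTop_add_const_right atTop (-C) h1
    simpa [sub_eq_add_neg] using this
  -- key eventual estimate
  have key : ∀ᶠ k : ℕ in atTop,
      (c / 2 * Real.log k + D) * (k:ℝ) - C ≤ Real.log (f k) := by
    filter_upwards [tendsto_natCast_atTop_atTop.eventually_ge_atTop (1 / (α * r)),
      tendsto_natCast_atTop_atTop.eventually_ge_atTop (2 / r),
      tendsto_natCast_atTop_atTop.eventually_ge_atTop (1 / (r - 1)),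
      tendsto_natCast_atTop_atTop.eventually_ge_atTop (4 / c),
      tendsto_natCast_atTop_atTop.eventually_ge_atTop (1:ℝ)] with k e1 e2 e3 e4 e5
    set x : ℝ := (k:ℝ) with hx_def
    have hx0 : (0:ℝ) < x := lt_of_lt_of_le one_pos e5
    have hL0 : 0 ≤ Real.log x := Real.log_nonneg e5
    have h1 : 1 ≤ α * r * x := by
      rw [div_le_iff₀ hαr] at e1; linarith [mul_comm x (α * r)]
    have h2 : 2 ≤ r * x := by
      rw [div_le_iff₀ hr0] at e2; linarith [mul_comm x r]
    have h3 : 1 + x ≤ r * x := by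
      rw [div_le_iff₀ (by linarith : (0:ℝ) < r - 1)] at e3; nlinarith
    have h4 : 2 ≤ c / 2 * x := by
      rw [div_le_iff₀ hc] at e4; nlinarith
    set n : ℕ := Nat.floor (r * x) with hn_def
    set m : ℕ := Nat.ceil (α * r * x) with hm_def
    have hF1 : (n:ℝ) ≤ r * x := Nat.floor_le (by positivity)
    have hF2 : r * x < (n:ℝ) + 1 := Nat.lt_floor_add_one _
    have hn2 : (2:ℝ) ≤ (n:ℝ) := by
      have : (2:ℕ) ≤ n := Nat.le_floor (by exact_mod_cast h2)
      exact_mod_cast this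
    have hF4 : α * r * x ≤ (m:ℝ) := Nat.le_ceil _
    have hF5 : (m:ℝ) < α * r * x + 1 := Nat.ceil_lt_add_one (by positivity)
    have hm1 : (1:ℝ) ≤ (m:ℝ) := by
      have : 1 ≤ m := Nat.one_le_ceil_iff.mpr (by linarith)
      exact_mod_cast this
    -- Gamma lower bound via factorial
    have hmono := Real.Gamma_strictMonoOn_Ici.monotoneOn
    have hGam1 : ((Nat.factorial n) : ℝ) ≤ Real.Gamma (r * x + 1) := by
      have h := hmono (a := (n:ℝ) + 1) (b := r * x + 1)
        (by simp only [Set.mem_Ici]; linarith)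
        (by simp only [Set.mem_Ici]; linarith)
        (by linarith)
      rwa [Real.Gamma_nat_eq_factorial] at h
    have hGam2 : Real.Gamma (α * r * x + 1) ≤ ((Nat.factorial m) : ℝ) := by
      have h := hmono (a := α * r * x + 1) (b := (m:ℝ) + 1)
        (by simp only [Set.mem_Ici]; linarith)
        (by simp only [Set.mem_Ici]; linarith)
        (by linarith)
      rwa [Real.Gamma_nat_eq_factorial] at h
    -- factorial lower bound : n^n / exp n ≤ n!
    have hfac1 : (n:ℝ) ^ n / Real.exp n ≤ ((Nat.factorial n) : ℝ) := by
      have hsum : (n:ℝ) ^ n / (Nat.factorial n) ≤ Real.exp n := by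
        calc (n:ℝ) ^ n / (Nat.factorial n) ≤ ∑ i ∈ Finset.range (n+1), (n:ℝ) ^ i / (Nat.factorial i) := by
              apply Finset.single_le_sum (f := fun i => (n:ℝ) ^ i / (Nat.factorial i))
              · intro i _; positivity
              · exact Finset.self_mem_range_succ n
          _ ≤ Real.exp n := Real.sum_le_exp_of_nonneg (by positivity) (n+1)
      rw [div_le_iff₀ (by positivity : (0:ℝ) < ((Nat.factorial n) : ℝ))] at hsum
      rw [div_le_iff₀ (Real.exp_pos _)]
      linarith
    have hfac2 : ((Nat.factorial k) : ℝ) ≤ x ^ k := by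
      rw [hx_def]
      exact_mod_cast Nat.factorial_le_pow k
    have hfac3 : ((Nat.factorial m) : ℝ) ≤ (m:ℝ) ^ m := by
      have := Nat.factorial_le_pow m
      exact_mod_cast this
    -- log bounds
    have hB1 : (r * x - 1) * Real.log x - r * x ≤ Real.log (Real.Gamma (r * x + 1)) := by
      have step1 : Real.log ((n:ℝ) ^ n / Real.exp n) ≤ Real.log (Real.Gamma (r * x + 1)) :=
        Real.log_le_log (by positivity) (le_trans hfac1 hGam1)
      rw [Real.log_div (by positivity) (Real.exp_ne_zero _), Real.log_pow,
        Real.log_exp] at step1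
      have hlx : Real.log x ≤ Real.log (n:ℝ) :=
        Real.log_le_log hx0 (by linarith)
      have hp1 : (r * x - 1) * Real.log x ≤ (n:ℝ) * Real.log x :=
        mul_le_mul_of_nonneg_right (by linarith) hL0
      have hp2 : (n:ℝ) * Real.log x ≤ (n:ℝ) * Real.log (n:ℝ) :=
        mul_le_mul_of_nonneg_left hlx (by linarith)
      linarith
    have hB2 : Real.log (Real.Gamma (α * r * x + 1)) ≤ (α * r * x + 1) * (Real.log x + C) := by
      have step1 : Real.log (Real.Gamma (α * r * x + 1)) ≤ Real.log ((m:ℝ) ^ m) :=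
        Real.log_le_log (hG2 k) (le_trans hGam2 hfac3)
      rw [Real.log_pow] at step1
      have hlm : Real.log (m:ℝ) ≤ Real.log x + C := by
        have hmle : (m:ℝ) ≤ (α * r + 1) * x := by nlinarith
        have := Real.log_le_log (by linarith : (0:ℝ) < (m:ℝ)) hmle
        rw [Real.log_mul (by positivity) (ne_of_gt hx0)] at this
        linarith
      have hlm0 : 0 ≤ Real.log (m:ℝ) := Real.log_nonneg hm1
      have hp1 : (m:ℝ) * Real.log (m:ℝ) ≤ (m:ℝ) * (Real.log x + C) :=
        mul_le_mul_of_nonneg_left hlm (by linarith)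
      have hp2 : (m:ℝ) * (Real.log x + C) ≤ (α * r * x + 1) * (Real.log x + C) :=
        mul_le_mul_of_nonneg_right (by linarith) (by linarith)
      linarith
    have hB3 : Real.log ((Nat.factorial k) : ℝ) ≤ (k:ℝ) * Real.log x := by
      have := Real.log_le_log (by positivity : (0:ℝ) < ((Nat.factorial k) : ℝ)) hfac2
      rwa [Real.log_pow] at this
    -- expand log (f k)
    have hlogf : Real.log (f k) = (k:ℝ) * Real.log ξ - Real.log ((Nat.factorial k) : ℝ)
        + (Real.log (Real.Gamma (r * x + 1)) - Real.log (Real.Gamma (α * r * x + 1)))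
        + (α * r * x) * Real.log t := by
      have hg1 := hG1 k
      have hg2 := hG2 k
      have hfk : ((Nat.factorial k) : ℝ) ≠ 0 := by positivity
      simp only [hf_def]
      rw [Real.log_mul (by positivity) (by positivity : t ^ (α * r * (k:ℝ)) ≠ 0),
        Real.log_mul (by positivity) (by positivity : Real.Gamma (r * (k:ℝ) + 1)
          / Real.Gamma (α * r * (k:ℝ) + 1) ≠ 0),
        Real.log_div (by positivity) hfk,
        Real.log_div (ne_of_gt hg1) (ne_of_gt hg2),
        Real.log_pow, Real.log_rpow ht]
    rw [hlogf]
    have hcc : c = r - α * r - 1 := hc_def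
    have hDD : D = Real.log ξ + α * r * Real.log t - r - α * r * C := hD_def
    have hfinal : 0 ≤ (c / 2 * x - 2) * Real.log x :=
      mul_nonneg (by linarith) hL0
    nlinarith [hB1, hB2, hB3, hfinal]
  have hlog : Tendsto (fun k => Real.log (f k)) atTop atTop :=
    tendsto_atTop_mono' _ key hbase
  have hf : Tendsto f atTop atTop := by
    have h := Real.tendsto_exp_atTop.comp hlog
    exact h.congr fun k => Real.exp_log (hfpos k)
  -- conclude the tsum is infinite
  apply ENNReal.eq_top_of_forall_nnreal_le
  intro q
  obtain ⟨k, hk⟩ := (hf.eventually_ge_atTop (q:ℝ)).exists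
  calc (q : ℝ≥0∞) = ENNReal.ofReal (q:ℝ) := ENNReal.ofReal_coe_nnreal.symm
    _ ≤ ENNReal.ofReal (f k) := ENNReal.ofReal_le_ofReal hk
    _ ≤ _ := ENNReal.le_tsum k
end
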